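/- arXiv:1509.04204 — 3 statements merged into one kernel-verified Lean document; each statement's English description precedes it below -/
import Mathlib

section
/- Let (F, G, φ, ψ) be a matrix factorization of a non-zerodivisor x ∈ S. Then the induced sequence F/xF → G/xG → F/xF obtained by reducing φ and ψ modulo x is exact at the middle term, i.e., the kernel of the reduction ψ̄ : G/xG → F/xF equals the image of the reduction φ̄ : F/xF → G/xG. -/
/-- The submodule `xM` of an `S`-module `M`. -/
def xSub {S : Type*} [CommRing S] (x : S) (M : Type*) [AddCommGroup M] [Module S M] :
    Submodule S M :=
  Ideal.span {x} • (⊤ : Submodule S M)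

/-- The map induced by an `S`-linear map `f : M → N` on the reductions `M/xM → N/xN`. -/
def redMap {S : Type*} [CommRing S] (x : S) {M N : Type*} [AddCommGroup M] [Module S M]
    [AddCommGroup N] [Module S N] (f : M →ₗ[S] N) :
    (M ⧸ xSub x M) →ₗ[S] (N ⧸ xSub x N) :=
  Submodule.mapQ _ _ f (by
    rw [← Submodule.map_le_iff_le_comap, xSub, xSub, Submodule.map_smul'']
    exact Submodule.smul_mono le_rfl le_top)

section Reduction

variable {S : Type*} [CommRing S] (x : S) {M N : Type*} [AddCommGroup M] [Module S M]
  [AddCommGroup N] [Module S N]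

lemma mem_xSub_iff {m : M} : m ∈ xSub x M ↔ ∃ m' : M, x • m' = m := by
  simp [xSub, Submodule.ideal_span_singleton_smul, Submodule.mem_smul_pointwise_iff_exists]

lemma redMap_mk (f : M →ₗ[S] N) (m : M) :
    redMap x f (Submodule.Quotient.mk m) = Submodule.Quotient.mk (f m) :=
  Submodule.mapQ_apply _ _ _ _

lemma range_redMap_le_ker_redMap {φ : M →ₗ[S] N} {ψ : N →ₗ[S] M}
    (hψφ : ψ ∘ₗ φ = x • LinearMap.id) :
    LinearMap.range (redMap x φ) ≤ LinearMap.ker (redMap x ψ) := by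
  rintro _ ⟨y, rfl⟩
  obtain ⟨m, rfl⟩ := Submodule.Quotient.mk_surjective _ y
  rw [LinearMap.mem_ker, redMap_mk, redMap_mk, Submodule.Quotient.mk_eq_zero, mem_xSub_iff]
  exact ⟨m, (LinearMap.congr_fun hψφ m).symm⟩

lemma ker_redMap_le_range_redMap {φ : M →ₗ[S] N} {ψ : N →ₗ[S] M} (hN : IsSMulRegular N x)
    (hφψ : φ ∘ₗ ψ = x • LinearMap.id) :
    LinearMap.ker (redMap x ψ) ≤ LinearMap.range (redMap x φ) := by
  intro y hy
  obtain ⟨n, rfl⟩ := Submodule.Quotient.mk_surjective _ y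
  rw [LinearMap.mem_ker, redMap_mk, Submodule.Quotient.mk_eq_zero, mem_xSub_iff] at hy
  obtain ⟨m, hm⟩ := hy
  have hφm : φ m = n := hN <| show x • φ m = x • n by
    rw [← map_smul, hm]
    exact LinearMap.congr_fun hφψ n
  exact ⟨Submodule.Quotient.mk m, by rw [redMap_mk, hφm]⟩

end Reduction

theorem mf_reduction_exact_middle_general {S : Type*} [CommRing S] (x : S)
    (hx : x ∈ nonZeroDivisors S)
    (F G : Type*) [AddCommGroup F] [Module S F] [AddCommGroup G] [Module S G]
    [Module.Free S G]
    (φ : F →ₗ[S] G) (ψ : G →ₗ[S] F)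
    (hψφ : ψ ∘ₗ φ = x • LinearMap.id) (hφψ : φ ∘ₗ ψ = x • LinearMap.id) :
    LinearMap.ker (redMap x ψ) = LinearMap.range (redMap x φ) :=
  le_antisymm
    (ker_redMap_le_range_redMap x (Module.Flat.isSMulRegular_of_nonZeroDivisors hx) hφψ)
    (range_redMap_le_ker_redMap x hψφ)

/-- For a matrix factorization (F, G, φ, ψ) of a non-zerodivisor x, the reduced
sequence F/xF → G/xG → F/xF is exact at the middle term: ker ψ̄ = im φ̄. -/
theorem mf_reduction_exact_middle {S : Type*} [CommRing S] (x : S)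
    (hx : x ∈ nonZeroDivisors S)
    (F G : Type*) [AddCommGroup F] [Module S F] [AddCommGroup G] [Module S G]
    [Module.Free S F] [Module.Finite S F] [Module.Free S G] [Module.Finite S G]
    (φ : F →ₗ[S] G) (ψ : G →ₗ[S] F)
    (hψφ : ψ ∘ₗ φ = x • LinearMap.id) (hφψ : φ ∘ₗ ψ = x • LinearMap.id) :
    LinearMap.ker (redMap x ψ) = LinearMap.range (redMap x φ) :=
  mf_reduction_exact_middle_general x hx F G φ ψ hψφ hφψ
end

section
/- Let (F, G, φ, ψ) be a matrix factorization of a non-zerodivisor x ∈ S. Then the kernel of the reduction φ̄ : F/xF → G/xG equals the image of the reduction ψ̄ : G/xG → F/xF; hence the 2-periodic sequence ··· → F/xF → G/xG → F/xF → ··· is an acyclic complex of free R = S/(x)-modules. -/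
lemma mem_xSub_iff_s3 {S : Type*} [CommRing S] (x : S) {M : Type*} [AddCommGroup M] [Module S M]
    (v : M) : v ∈ xSub x M ↔ ∃ w, x • w = v := by
  constructor
  · intro h
    refine Submodule.smul_induction_on h ?_ ?_
    · rintro r hr n -
      obtain ⟨c, rfl⟩ := Ideal.mem_span_singleton'.mp hr
      exact ⟨c • n, by rw [smul_smul, mul_comm, mul_smul]⟩
    · rintro a b ⟨wa, rfl⟩ ⟨wb, rfl⟩
      exact ⟨wa + wb, by rw [smul_add]⟩
  · rintro ⟨w, rfl⟩
    exact Submodule.smul_mem_smul (Ideal.mem_span_singleton_self x) trivial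

lemma smul_cancel_free {S : Type*} [CommRing S] {x : S} (hx : x ∈ nonZeroDivisors S)
    {F : Type*} [AddCommGroup F] [Module S F] [Module.Free S F] {a b : F}
    (h : x • a = x • b) : a = b := by
  classical
  let bas := Module.Free.chooseBasis S F
  apply bas.repr.injective
  ext i
  have := congrArg (fun v => bas.repr v i) h
  simp only [map_smul, Finsupp.smul_apply, smul_eq_mul] at this
  exact mul_cancel_left_mem_nonZeroDivisors hx |>.mp this

/-- For a matrix factorization (F, G, φ, ψ) of a non-zerodivisor x, the reduced
sequence is also exact at the other spot: ker φ̄ = im ψ̄.  Hence the 2-periodic sequence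
··· → F/xF → G/xG → F/xF → ··· is an acyclic complex of free S/(x)-modules. -/
theorem mf_reduction_exact_other {S : Type*} [CommRing S] (x : S)
    (hx : x ∈ nonZeroDivisors S)
    (F G : Type*) [AddCommGroup F] [Module S F] [AddCommGroup G] [Module S G]
    [Module.Free S F] [Module.Finite S F] [Module.Free S G] [Module.Finite S G]
    (φ : F →ₗ[S] G) (ψ : G →ₗ[S] F)
    (hψφ : ψ ∘ₗ φ = x • LinearMap.id) (hφψ : φ ∘ₗ ψ = x • LinearMap.id) :
    LinearMap.ker (redMap x φ) = LinearMap.range (redMap x ψ) := by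
  ext y
  obtain ⟨f, rfl⟩ := Submodule.Quotient.mk_surjective _ y
  constructor
  · intro h
    have hφf : φ f ∈ xSub x G := by
      rw [LinearMap.mem_ker, redMap, Submodule.mapQ_apply,
        Submodule.Quotient.mk_eq_zero] at h
      exact h
    obtain ⟨g, hg⟩ := (mem_xSub_iff_s3 x (φ f)).mp hφf
    have h1 : x • f = x • ψ g := by
      have := congrArg (fun m => m f) hψφ
      simp only [LinearMap.comp_apply, LinearMap.smul_apply, LinearMap.id_apply] at this
      rw [← this, ← hg, map_smul]
    have h2 : f = ψ g := smul_cancel_free hx h1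
    refine ⟨Submodule.Quotient.mk g, ?_⟩
    rw [redMap, Submodule.mapQ_apply, h2]
  · rintro ⟨z, hz⟩
    obtain ⟨g, rfl⟩ := Submodule.Quotient.mk_surjective _ z
    rw [← hz]
    rw [LinearMap.mem_ker, redMap, redMap, Submodule.mapQ_apply, Submodule.mapQ_apply,
      Submodule.Quotient.mk_eq_zero]
    have := congrArg (fun m => m g) hφψ
    simp only [LinearMap.comp_apply, LinearMap.smul_apply, LinearMap.id_apply] at this
    rw [this]
    exact (mem_xSub_iff_s3 x _).mpr ⟨g, rfl⟩
end

section
/- Let R be a commutative Noetherian local Gorenstein ring (R has finite injective dimension as a module over itself). Then every acyclic complex of finitely generated free R-modules is totally acyclic: if M is an exact complex of finitely generated free R-modules, then Hom_R(M, R) is also exact. -/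
open CategoryTheory

/-- `injLE R n M` : the `R`-module `M` has injective dimension at most `n`
(there is an injective resolution of length at most `n`). -/
def injLE (R : Type u) [CommRing R] : ℕ → ModuleCat.{u} R → Prop
  | 0, M => Injective M
  | n + 1, M => ∃ (I : ModuleCat.{u} R) (f : M →ₗ[R] I), Injective I ∧
      Function.Injective f ∧ injLE R n (ModuleCat.of R (I ⧸ LinearMap.range f))

section aux

variable {R : Type u} [CommRing R]
  (M : ℤ → Type u) [∀ n, AddCommGroup (M n)] [∀ n, Module R (M n)]
  [∀ n, Module.Free R (M n)]
  (d : ∀ n : ℤ, M n →ₗ[R] M (n + 1))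

lemma extend_from_range_aux (hac : ∀ n, Function.Exact (d n) (d (n + 1))) (N : ℕ) :
    ∀ (J : ModuleCat.{u} R), injLE R N J →
    ∀ (n : ℤ) (f : LinearMap.range (d n) →ₗ[R] J),
    ∃ g : M (n + 1) →ₗ[R] J, ∀ x : LinearMap.range (d n), g x = f x := by
  induction N with
  | zero =>
    intro J hJ n f
    have hinj : Module.Injective R J :=
      Module.injective_module_of_injective_object R J (inj := hJ)
    obtain ⟨g, hg⟩ := hinj.out (LinearMap.range (d n)).subtype Subtype.val_injective f
    exact ⟨g, hg⟩
  | succ N ih =>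
    intro J hJ n f
    obtain ⟨I, e, hIinj, he, hQ⟩ := hJ
    have hI : Module.Injective R I :=
      Module.injective_module_of_injective_object R I (inj := hIinj)
    obtain ⟨g, hg⟩ := hI.out (LinearMap.range (d n)).subtype Subtype.val_injective
      (e ∘ₗ f)
    set p : Submodule R I := LinearMap.range e with hp
    have hker : LinearMap.ker (d (n + 1)) = LinearMap.range (d n) :=
      LinearMap.exact_iff.mp (hac n)
    have hle : LinearMap.ker (d (n + 1)) ≤ LinearMap.ker (p.mkQ ∘ₗ g) := by
      rw [hker]
      rintro x hx
      have : g x = e (f ⟨x, hx⟩) := hg ⟨x, hx⟩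
      simp only [LinearMap.mem_ker, LinearMap.comp_apply, this]
      rw [Submodule.mkQ_apply, Submodule.Quotient.mk_eq_zero]
      exact ⟨f ⟨x, hx⟩, rfl⟩
    let q : (M (n + 1) ⧸ LinearMap.ker (d (n + 1))) →ₗ[R] (I ⧸ p) :=
      Submodule.liftQ _ (p.mkQ ∘ₗ g) hle
    let hbar : LinearMap.range (d (n + 1)) →ₗ[R] (I ⧸ p) :=
      q ∘ₗ (d (n + 1)).quotKerEquivRange.symm.toLinearMap
    obtain ⟨h, hh⟩ := ih (ModuleCat.of R (I ⧸ p)) hQ (n + 1) hbar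
    have hhd : ∀ x : M (n + 1), h (d (n + 1) x) = p.mkQ (g x) := by
      intro x
      have hmem : d (n + 1) x ∈ LinearMap.range (d (n + 1)) := ⟨x, rfl⟩
      have h1 : h (d (n + 1) x) = hbar ⟨d (n + 1) x, hmem⟩ := hh ⟨d (n + 1) x, hmem⟩
      rw [h1]
      show q ((d (n + 1)).quotKerEquivRange.symm ⟨d (n + 1) x, hmem⟩) = p.mkQ (g x)
      rw [LinearMap.quotKerEquivRange_symm_apply_image]
      rfl
    obtain ⟨H, hH⟩ := Module.projective_lifting_property p.mkQ
      h (Submodule.mkQ_surjective p)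
    have hmem : ∀ x : M (n + 1), g x - H (d (n + 1) x) ∈ p := by
      intro x
      rw [← Submodule.ker_mkQ p, LinearMap.mem_ker, map_sub]
      have : p.mkQ (H (d (n + 1) x)) = h (d (n + 1) x) := LinearMap.congr_fun hH (d (n + 1) x)
      rw [this, hhd, sub_self]
    refine ⟨(LinearEquiv.ofInjective e he).symm.toLinearMap ∘ₗ
      LinearMap.codRestrict p (g - H ∘ₗ d (n + 1)) hmem, ?_⟩
    intro x
    have hx0 : d (n + 1) (x : M (n + 1)) = 0 := by
      have : (x : M (n + 1)) ∈ LinearMap.ker (d (n + 1)) := by rw [hker]; exact x.2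
      exact this
    apply he
    have h2 : ∀ y : p, e ((LinearEquiv.ofInjective e he).symm y) = (y : I) := by
      intro y
      rw [← LinearEquiv.ofInjective_apply e (h := he), LinearEquiv.apply_symm_apply]
    show e ((LinearEquiv.ofInjective e he).symm
      (LinearMap.codRestrict p (g - H ∘ₗ d (n + 1)) hmem (x : M (n + 1)))) = e (f x)
    rw [h2]
    show (g - H ∘ₗ d (n + 1)) (x : M (n + 1)) = e (f x)
    simp only [LinearMap.sub_apply, LinearMap.comp_apply, hx0, map_zero, sub_zero]
    exact hg x

end aux

/-- over a commutative Noetherian local Gorenstein ring `R` (i.e. `R` has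
finite injective dimension over itself), every acyclic complex of finitely generated free
`R`-modules is totally acyclic: if `M` is exact then so is `Hom_R(M, R)`. -/
theorem acyclic_is_totally_acyclic_over_gorenstein {R : Type u} [CommRing R]
    [IsNoetherianRing R] [IsLocalRing R]
    (hGor : ∃ n : ℕ, injLE R n (ModuleCat.of R R))
    (M : ℤ → Type u) [∀ n, AddCommGroup (M n)] [∀ n, Module R (M n)]
    [∀ n, Module.Free R (M n)] [∀ n, Module.Finite R (M n)]
    (d : ∀ n : ℤ, M n →ₗ[R] M (n + 1))
    (hcplx : ∀ n, d (n + 1) ∘ₗ d n = 0)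
    (hac : ∀ n, Function.Exact (d n) (d (n + 1))) :
    ∀ n, Function.Exact (d (n + 1)).dualMap (d n).dualMap := by
  obtain ⟨N, hN⟩ := hGor
  intro n y
  constructor
  · intro hy
    -- `y` vanishes on `range (d n) = ker (d (n+1))`, so it factors through `range (d (n+1))`
    have hker : LinearMap.ker (d (n + 1 + 1)) = LinearMap.range (d (n + 1)) :=
      LinearMap.exact_iff.mp (hac (n + 1))
    have hle : LinearMap.ker (d (n + 1)) ≤ LinearMap.ker y := by
      rw [LinearMap.exact_iff.mp (hac n)]
      rintro x ⟨z, rfl⟩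
      exact LinearMap.congr_fun hy z
    let ybar : LinearMap.range (d (n + 1)) →ₗ[R] R :=
      (Submodule.liftQ _ y hle) ∘ₗ (d (n + 1)).quotKerEquivRange.symm.toLinearMap
    obtain ⟨ψ, hψ⟩ := extend_from_range_aux M d hac N (ModuleCat.of R R) hN (n + 1) ybar
    refine ⟨ψ, ?_⟩
    ext x
    show ψ (d (n + 1) x) = y x
    have hmem : d (n + 1) x ∈ LinearMap.range (d (n + 1)) := ⟨x, rfl⟩
    have h1 : ψ (d (n + 1) x) = ybar ⟨d (n + 1) x, hmem⟩ := hψ ⟨d (n + 1) x, hmem⟩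
    rw [h1]
    show Submodule.liftQ _ y hle ((d (n + 1)).quotKerEquivRange.symm ⟨d (n + 1) x, hmem⟩) = y x
    rw [LinearMap.quotKerEquivRange_symm_apply_image]
    rfl
  · rintro ⟨ψ, rfl⟩
    ext x
    show ψ (d (n + 1) (d n x)) = 0
    have h0 : d (n + 1) (d n x) = 0 := LinearMap.congr_fun (hcplx n) x
    rw [h0, map_zero]
end
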